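/- The formula ((□⊥→⊥)→⊥)→□⊥ is not a theorem of constructive modal logic CK. -/
import Mathlib


namespace JIKPaper

-- Proof terms and satisfiers for intuitionistic justification logic.
mutual
inductive PrfTm : Type
  | pvar : Nat → PrfTm
  | pconst : Nat → PrfTm
  | sum : PrfTm → PrfTm → PrfTm
  | app : PrfTm → PrfTm → PrfTm
  | upd : SatTm → PrfTm → PrfTm
  | bang : PrfTm → PrfTm
inductive SatTm : Type
  | svar : Nat → SatTm
  | uni : SatTm → SatTm → SatTm
  | prop : PrfTm → SatTm → SatTm
end

/-- Justification formulas. -/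
inductive JForm : Type
  | bot : JForm
  | atom : Nat → JForm
  | and : JForm → JForm → JForm
  | or : JForm → JForm → JForm
  | impl : JForm → JForm → JForm
  | jst : PrfTm → JForm → JForm
  | sat : SatTm → JForm → JForm

/-- Intuitionistic modal formulas. -/
inductive MForm : Type
  | bot : MForm
  | atom : Nat → MForm
  | and : MForm → MForm → MForm
  | or : MForm → MForm → MForm
  | impl : MForm → MForm → MForm
  | box : MForm → MForm
  | dia : MForm → MForm

/-- Axiom instances of the justification logics JIK (false,false), JIKt (true,false),
JIK4 (false,true), JIS4 (true,true): intuitionistic propositional axioms, jk1–jk5,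
sum axioms, and optionally the jt and j4 axioms. -/
inductive JAx : Bool → Bool → JForm → Prop
  | ax1 {hT h4 : Bool} {A B : JForm} : JAx hT h4 (A.impl (B.impl A))
  | ax2 {hT h4 : Bool} {A B C : JForm} :
      JAx hT h4 ((A.impl (B.impl C)).impl ((A.impl B).impl (A.impl C)))
  | andI {hT h4 : Bool} {A B : JForm} : JAx hT h4 (A.impl (B.impl (A.and B)))
  | andE1 {hT h4 : Bool} {A B : JForm} : JAx hT h4 ((A.and B).impl A)
  | andE2 {hT h4 : Bool} {A B : JForm} : JAx hT h4 ((A.and B).impl B)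
  | orI1 {hT h4 : Bool} {A B : JForm} : JAx hT h4 (A.impl (A.or B))
  | orI2 {hT h4 : Bool} {A B : JForm} : JAx hT h4 (B.impl (A.or B))
  | orE {hT h4 : Bool} {A B C : JForm} :
      JAx hT h4 ((A.impl C).impl ((B.impl C).impl ((A.or B).impl C)))
  | exf {hT h4 : Bool} {A : JForm} : JAx hT h4 (JForm.bot.impl A)
  | jk1 {hT h4 : Bool} {s t : PrfTm} {A B : JForm} :
      JAx hT h4 ((JForm.jst s (A.impl B)).impl
        ((JForm.jst t A).impl (JForm.jst (PrfTm.app s t) B)))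
  | jk2 {hT h4 : Bool} {s : PrfTm} {μ : SatTm} {A B : JForm} :
      JAx hT h4 ((JForm.jst s (A.impl B)).impl
        ((JForm.sat μ A).impl (JForm.sat (SatTm.prop s μ) B)))
  | jk3 {hT h4 : Bool} {μ : SatTm} {A B : JForm} :
      JAx hT h4 ((JForm.sat μ (A.or B)).impl ((JForm.sat μ A).or (JForm.sat μ B)))
  | jk4 {hT h4 : Bool} {μ : SatTm} {t : PrfTm} {A B : JForm} :
      JAx hT h4 (((JForm.sat μ A).impl (JForm.jst t B)).impl
        (JForm.jst (PrfTm.upd μ t) (A.impl B)))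
  | jk5 {hT h4 : Bool} {μ : SatTm} :
      JAx hT h4 ((JForm.sat μ JForm.bot).impl JForm.bot)
  | sum1 {hT h4 : Bool} {s t : PrfTm} {A : JForm} :
      JAx hT h4 ((JForm.jst s A).impl (JForm.jst (PrfTm.sum s t) A))
  | sum2 {hT h4 : Bool} {s t : PrfTm} {A : JForm} :
      JAx hT h4 ((JForm.jst t A).impl (JForm.jst (PrfTm.sum s t) A))
  | uni1 {hT h4 : Bool} {μ ν : SatTm} {A : JForm} :
      JAx hT h4 ((JForm.sat μ A).impl (JForm.sat (SatTm.uni μ ν) A))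
  | uni2 {hT h4 : Bool} {μ ν : SatTm} {A : JForm} :
      JAx hT h4 ((JForm.sat ν A).impl (JForm.sat (SatTm.uni μ ν) A))
  | jtBox {h4 : Bool} {t : PrfTm} {A : JForm} : JAx true h4 ((JForm.jst t A).impl A)
  | jtDia {h4 : Bool} {μ : SatTm} {A : JForm} : JAx true h4 (A.impl (JForm.sat μ A))
  | j4Box {hT : Bool} {t : PrfTm} {A : JForm} :
      JAx hT true ((JForm.jst t A).impl (JForm.jst (PrfTm.bang t) (JForm.jst t A)))
  | j4Dia {hT : Bool} {μ ν : SatTm} {A : JForm} :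
      JAx hT true ((JForm.sat μ (JForm.sat ν A)).impl (JForm.sat ν A))

/-- `cₙ:⋯:c₁:A` for a list of constants. -/
def canChain (cs : List Nat) (A : JForm) : JForm :=
  cs.foldr (fun c B => JForm.jst (PrfTm.pconst c) B) A

/-- Theorems of the justification logic: closure of the axioms under modus ponens and
the constant axiom necessitation rule (with the empty chain giving the axioms). -/
inductive JThm (hT h4 : Bool) : JForm → Prop
  | can {A : JForm} (cs : List Nat) : JAx hT h4 A → JThm hT h4 (canChain cs A)
  | mp {A B : JForm} : JThm hT h4 (A.impl B) → JThm hT h4 A → JThm hT h4 B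

/-- Axiom instances of IK (false,false), IKt (true,false), IK4 (false,true), IS4 (true,true). -/
inductive MAx : Bool → Bool → MForm → Prop
  | ax1 {hT h4 : Bool} {A B : MForm} : MAx hT h4 (A.impl (B.impl A))
  | ax2 {hT h4 : Bool} {A B C : MForm} :
      MAx hT h4 ((A.impl (B.impl C)).impl ((A.impl B).impl (A.impl C)))
  | andI {hT h4 : Bool} {A B : MForm} : MAx hT h4 (A.impl (B.impl (A.and B)))
  | andE1 {hT h4 : Bool} {A B : MForm} : MAx hT h4 ((A.and B).impl A)
  | andE2 {hT h4 : Bool} {A B : MForm} : MAx hT h4 ((A.and B).impl B)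
  | orI1 {hT h4 : Bool} {A B : MForm} : MAx hT h4 (A.impl (A.or B))
  | orI2 {hT h4 : Bool} {A B : MForm} : MAx hT h4 (B.impl (A.or B))
  | orE {hT h4 : Bool} {A B C : MForm} :
      MAx hT h4 ((A.impl C).impl ((B.impl C).impl ((A.or B).impl C)))
  | exf {hT h4 : Bool} {A : MForm} : MAx hT h4 (MForm.bot.impl A)
  | k1 {hT h4 : Bool} {A B : MForm} :
      MAx hT h4 ((A.impl B).box.impl (A.box.impl B.box))
  | k2 {hT h4 : Bool} {A B : MForm} :
      MAx hT h4 ((A.impl B).box.impl (A.dia.impl B.dia))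
  | k3 {hT h4 : Bool} {A B : MForm} :
      MAx hT h4 ((A.or B).dia.impl (A.dia.or B.dia))
  | k4 {hT h4 : Bool} {A B : MForm} :
      MAx hT h4 ((A.dia.impl B.box).impl (A.impl B).box)
  | k5 {hT h4 : Bool} : MAx hT h4 (MForm.bot.dia.impl MForm.bot)
  | tBox {h4 : Bool} {A : MForm} : MAx true h4 (A.box.impl A)
  | tDia {h4 : Bool} {A : MForm} : MAx true h4 (A.impl A.dia)
  | fourBox {hT : Bool} {A : MForm} : MAx hT true (A.box.impl A.box.box)
  | fourDia {hT : Bool} {A : MForm} : MAx hT true (A.dia.dia.impl A.dia)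

/-- Theorems of the intuitionistic modal logic: modus ponens and necessitation. -/
inductive MThm (hT h4 : Bool) : MForm → Prop
  | ax {A : MForm} : MAx hT h4 A → MThm hT h4 A
  | mp {A B : MForm} : MThm hT h4 (A.impl B) → MThm hT h4 A → MThm hT h4 B
  | nec {A : MForm} : MThm hT h4 A → MThm hT h4 A.box

/-- The forgetful projection from justification formulas to modal formulas. -/
def forget : JForm → MForm
  | .bot => .bot
  | .atom n => .atom n
  | .and A B => .and (forget A) (forget B)
  | .or A B => .or (forget A) (forget B)
  | .impl A B => .impl (forget A) (forget B)
  | .jst _ A => .box (forget A)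
  | .sat _ A => .dia (forget A)


/-- Axioms of constructive modal logic CK: intuitionistic propositional axioms plus k1, k2. -/
inductive CAx : MForm → Prop
  | ax1 {A B : MForm} : CAx (A.impl (B.impl A))
  | ax2 {A B C : MForm} : CAx ((A.impl (B.impl C)).impl ((A.impl B).impl (A.impl C)))
  | andI {A B : MForm} : CAx (A.impl (B.impl (A.and B)))
  | andE1 {A B : MForm} : CAx ((A.and B).impl A)
  | andE2 {A B : MForm} : CAx ((A.and B).impl B)
  | orI1 {A B : MForm} : CAx (A.impl (A.or B))
  | orI2 {A B : MForm} : CAx (B.impl (A.or B))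
  | orE {A B C : MForm} : CAx ((A.impl C).impl ((B.impl C).impl ((A.or B).impl C)))
  | exf {A : MForm} : CAx (MForm.bot.impl A)
  | k1 {A B : MForm} : CAx ((A.impl B).box.impl (A.box.impl B.box))
  | k2 {A B : MForm} : CAx ((A.impl B).box.impl (A.dia.impl B.dia))

/-- Theorems of CK. -/
inductive CThm : MForm → Prop
  | ax {A : MForm} : CAx A → CThm A
  | mp {A B : MForm} : CThm (A.impl B) → CThm A → CThm B
  | nec {A : MForm} : CThm A → CThm A.box

/-- Heyting implication on the 3-element chain. -/
def himp3 (a b : Fin 3) : Fin 3 := if a ≤ b then 2 else b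

/-- Evaluation into the 3-element Heyting algebra `Fin 3` with `□x = ◇x = max x 1`. -/
def ev : MForm → Fin 3
  | .bot => 0
  | .atom _ => 0
  | .and A B => min (ev A) (ev B)
  | .or A B => max (ev A) (ev B)
  | .impl A B => himp3 (ev A) (ev B)
  | .box A => max (ev A) 1
  | .dia A => max (ev A) 1

theorem ev_sound {A : MForm} (h : CThm A) : ev A = 2 := by
  induction h with
  | ax hax =>
    cases hax with
    | @ax1 P Q => simp only [ev]; generalize ev P = a; generalize ev Q = b; revert a b; decide
    | @ax2 P Q R => simp only [ev]; generalize ev P = a; generalize ev Q = b;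
                    generalize ev R = c; revert a b c; decide
    | @andI P Q => simp only [ev]; generalize ev P = a; generalize ev Q = b; revert a b; decide
    | @andE1 P Q => simp only [ev]; generalize ev P = a; generalize ev Q = b; revert a b; decide
    | @andE2 P Q => simp only [ev]; generalize ev P = a; generalize ev Q = b; revert a b; decide
    | @orI1 P Q => simp only [ev]; generalize ev P = a; generalize ev Q = b; revert a b; decide
    | @orI2 P Q => simp only [ev]; generalize ev P = a; generalize ev Q = b; revert a b; decide
    | @orE P Q R => simp only [ev]; generalize ev P = a; generalize ev Q = b;
                    generalize ev R = c; revert a b c; decide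
    | @exf P => simp only [ev]; generalize ev P = a; revert a; decide
    | @k1 P Q => simp only [ev]; generalize ev P = a; generalize ev Q = b; revert a b; decide
    | @k2 P Q => simp only [ev]; generalize ev P = a; generalize ev Q = b; revert a b; decide
  | mp _ _ ih1 ih2 =>
    simp only [ev, ih2, himp3] at ih1
    split at ih1 <;> omega
  | nec _ ih => simp [ev, ih]

/-- ((□⊥→⊥)→⊥)→□⊥ is not a theorem of CK. -/
theorem example_not_theorem_of_CK :
    ¬ CThm ((((MForm.bot.box.impl MForm.bot).impl MForm.bot)).impl MForm.bot.box) := by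
  intro h
  have := ev_sound h
  simp only [ev] at this
  exact absurd this (by decide)

end JIKPaper
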